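/- The idempotent e = (1, 0, 0) of R does not belong to W, yet for every integer n ≥ 1 multiplication by e maps the ideal m₂ⁿ of W into itself: for every x ∈ m₂ⁿ, the element e·x (computed in R) lies in m₂ⁿ. In particular, e is an endomorphism of the W-module m₂ⁿ that does not come from W. -/

import Mathlib

abbrev Rng : Type := ℤ × Zsqrtd 2 × Zsqrtd 3

def Wset : Set Rng :=
  {p | p.1 ≡ p.2.1.re [ZMOD 2] ∧ p.1 ≡ p.2.2.re + p.2.2.im [ZMOD 2] ∧
       p.2.1.im ≡ p.2.2.im [ZMOD 2]}

private lemma modeq_iff (a b : ℤ) : a ≡ b [ZMOD 2] ↔ ((a : ZMod 2) = b) :=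
  (ZMod.intCast_eq_intCast_iff a b 2).symm

def W : Subring Rng where
  carrier := Wset
  zero_mem' := by refine ⟨?_, ?_, ?_⟩ <;> decide
  one_mem' := by refine ⟨?_, ?_, ?_⟩ <;> decide
  add_mem' := by
    rintro a b ⟨h1, h2, h3⟩ ⟨g1, g2, g3⟩
    refine ⟨h1.add g1, ?_, h3.add g3⟩
    simpa [add_add_add_comm] using h2.add g2
  neg_mem' := by
    rintro a ⟨h1, h2, h3⟩
    refine ⟨h1.neg, ?_, h3.neg⟩
    have := h2.neg
    simp only [Wset, Set.mem_setOf_eq, Prod.fst_neg, Prod.snd_neg, Zsqrtd.re_neg,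
      Zsqrtd.im_neg, Int.modEq_iff_dvd] at this ⊢
    omega
  mul_mem' := by
    rintro a b ⟨h1, h2, h3⟩ ⟨g1, g2, g3⟩
    simp only [Wset, Set.mem_setOf_eq, Prod.fst_mul, Prod.snd_mul, Zsqrtd.re_mul,
      Zsqrtd.im_mul, modeq_iff] at h1 h2 h3 g1 g2 g3 ⊢
    push_cast at h1 h2 h3 g1 g2 g3 ⊢
    have h0 : (2 : ZMod 2) = 0 := rfl
    refine ⟨?_, ?_, ?_⟩
    · rw [← h1, ← g1, h0]; ring
    · linear_combination (b.1 : ZMod 2) * h2 + ((a.2.2.re : ZMod 2) + a.2.2.im) * g2 -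
        ((a.2.2.im : ZMod 2) * b.2.2.im) * h0
    · linear_combination (b.2.1.im : ZMod 2) * h2 - (b.2.1.im : ZMod 2) * h1
        + (b.2.1.re : ZMod 2) * h3 + ((a.2.2.re : ZMod 2) + a.2.2.im) * g3
        + (a.2.2.im : ZMod 2) * g2 - (a.2.2.im : ZMod 2) * g1
        + ((a.2.2.im : ZMod 2) * b.2.2.im) * h0

lemma mem_W_iff (x : Rng) : x ∈ W ↔ x ∈ Wset := Iff.rfl

/-- The ideal `m₂ = {(a, b, c) ∈ W : a is even}` of `W`. -/
def m2 : Ideal W where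
  carrier := {x | Even ((x : Rng).1)}
  zero_mem' := Even.zero
  add_mem' := fun hx hy => hx.add hy
  smul_mem' := fun c x hx => hx.mul_left ((c : Rng).1)

/-- The idempotent `e = (1,0,0)` of `R`. -/
def e : Rng := ((1 : ℤ), (0 : Zsqrtd 2), (0 : Zsqrtd 3))

/-!
For `x = (a, b, c) ∈ m₂` the product `e·x = (a, 0, 0)` satisfies the congruences defining `W`
because `a` is even, so `e` maps `m₂` into itself. Since `m₂ⁿ = m₂ · m₂ⁿ⁻¹` and
`e·(p·q) = (e·p)·q`, this stability passes to every power. On the other hand `e ∉ W`,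
as `1 ≢ 0 (mod 2)`.
-/

theorem Subring.exists_coe_eq_mul_of_mem_mul {R : Type*} [CommRing R] {S : Subring R}
    {I J : Ideal S} {e : R} (hI : ∀ x ∈ I, ∃ y ∈ I, (y : R) = e * x) {x : S}
    (hx : x ∈ I * J) : ∃ y ∈ I * J, (y : R) = e * x := by
  refine Submodule.mul_induction_on hx (fun p hp q hq => ?_) ?_
  · obtain ⟨y, hyI, hy⟩ := hI p hp
    exact ⟨y * q, Submodule.mul_mem_mul hyI hq, by push_cast [hy]; ring⟩
  · rintro a b ⟨y₁, hy₁, ha⟩ ⟨y₂, hy₂, hb⟩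
    exact ⟨y₁ + y₂, add_mem hy₁ hy₂, by push_cast [ha, hb]; ring⟩

theorem Subring.exists_coe_eq_mul_of_mem_pow {R : Type*} [CommRing R] {S : Subring R}
    {I : Ideal S} {e : R} (hI : ∀ x ∈ I, ∃ y ∈ I, (y : R) = e * x) {n : ℕ} (hn : n ≠ 0)
    {x : S} (hx : x ∈ I ^ n) : ∃ y ∈ I ^ n, (y : R) = e * x := by
  obtain ⟨m, rfl⟩ := Nat.exists_eq_succ_of_ne_zero hn
  rw [pow_succ'] at hx ⊢
  exact exists_coe_eq_mul_of_mem_mul hI hx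

theorem e_notMem_W : e ∉ W := fun h => absurd h.1 (by decide)

theorem mk_zero_zero_mem_W {a : ℤ} (ha : Even a) : ((a, 0, 0) : Rng) ∈ W := by
  obtain ⟨k, rfl⟩ := ha
  refine ⟨?_, ?_, ?_⟩ <;> simp only [Int.ModEq, Zsqrtd.re_zero, Zsqrtd.im_zero] <;> omega

theorem e_mul (x : Rng) : e * x = (x.1, 0, 0) := by
  simp [e, Prod.ext_iff]

theorem exists_coe_eq_e_mul_of_mem_m2 (x : W) (hx : x ∈ m2) :
    ∃ y ∈ m2, (y : Rng) = e * x :=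
  ⟨⟨_, mk_zero_zero_mem_W hx⟩, hx, (e_mul x).symm⟩

/-- `e = (1,0,0) ∉ W`, yet for every `n ≥ 1` multiplication by `e` (computed in `R`)
maps the ideal `m₂ⁿ` of `W` into itself. -/
theorem stmt9 :
    e ∉ W ∧
    ∀ n : ℕ, 1 ≤ n → ∀ x : W, x ∈ m2 ^ n →
      ∃ y : W, (y : Rng) = e * (x : Rng) ∧ y ∈ m2 ^ n := by
  refine ⟨e_notMem_W, fun n hn x hx => ?_⟩
  obtain ⟨y, hy, hye⟩ :=
    Subring.exists_coe_eq_mul_of_mem_pow exists_coe_eq_e_mul_of_mem_m2 (by omega) hx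
  exact ⟨y, hye, hy⟩
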